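/- Let (A,∘,α) be a Hom-Jordan algebra, (V,ρ,φ) a representation, and T: V → A an O-operator (i.e., Tφ = αT and T(u)∘T(v) = T(ρ(T(u))v + ρ(T(v))u)). Then the product u∗v = ρ(T(u))v together with φ defines a Hom-pre-Jordan algebra structure on V. -/

import Mathlib

universe u

section Defs

variable {K : Type*} {A : Type u} {V : Type*} [Field K] [CharZero K]
  [AddCommGroup A] [Module K A] [AddCommGroup V] [Module K V]

/-- Anti-commutator of a bilinear product. -/
def ac (m : A →ₗ[K] A →ₗ[K] A) (x y : A) : A := m x y + m y x

/-- Hom-associator. -/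
def homAssociator (m : A →ₗ[K] A →ₗ[K] A) (α : A →ₗ[K] A) (x y z : A) : A :=
  m (m x y) (α z) - m (α x) (m y z)

/-- Hom-Jordan algebra: commutative product satisfying the linearized Hom-Jordan identity. -/
def IsHomJordan (m : A →ₗ[K] A →ₗ[K] A) (α : A →ₗ[K] A) : Prop :=
  (∀ x y, m x y = m y x) ∧
  ∀ x y z u,
    homAssociator m α (m x y) (α u) (α z) + homAssociator m α (m y z) (α u) (α x)
      + homAssociator m α (m z x) (α u) (α y) = 0

/-- Representation of a Hom-Jordan algebra. -/
def IsHomJordanRep (m : A →ₗ[K] A →ₗ[K] A) (α : A →ₗ[K] A)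
    (ρ : A →ₗ[K] Module.End K V) (φ : Module.End K V) : Prop :=
  (∀ x, φ * ρ x = ρ (α x) * φ) ∧
  (∀ x y z,
    ρ (α (α x)) * ρ (m y z) * φ + ρ (α (α y)) * ρ (m z x) * φ + ρ (α (α z)) * ρ (m x y) * φ
    = ρ (m (α x) (α y)) * ρ (α z) * φ + ρ (m (α y) (α z)) * ρ (α x) * φ
      + ρ (m (α z) (α x)) * ρ (α y) * φ) ∧
  (∀ x y z,
    ρ (m (m x y) (α z)) * φ * φ + ρ (α (α x)) * ρ (α z) * ρ y + ρ (α (α z)) * ρ (α y) * ρ x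
    = ρ (m (α x) (α y)) * ρ (α z) * φ + ρ (m (α y) (α z)) * ρ (α x) * φ
      + ρ (m (α z) (α x)) * ρ (α y) * φ)

/-- Hom-pre-Jordan algebra. -/
def IsHomPreJordan (m : A →ₗ[K] A →ₗ[K] A) (α : A →ₗ[K] A) : Prop :=
  (∀ x y z u,
    m (ac m (α x) (α y)) (m (α z) (α u)) + m (ac m (α y) (α z)) (m (α x) (α u))
      + m (ac m (α z) (α x)) (m (α y) (α u))
    = m (α (α x)) (m (ac m y z) (α u)) + m (α (α y)) (m (ac m z x) (α u))
      + m (α (α z)) (m (ac m x y) (α u))) ∧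
  (∀ x y z u,
    m (ac m (ac m x z) (α y)) (α (α u)) + m (α (α x)) (m (α y) (m z u))
      + m (α (α z)) (m (α y) (m x u))
    = m (α (α x)) (m (ac m y z) (α u)) + m (α (α y)) (m (ac m z x) (α u))
      + m (α (α z)) (m (ac m x y) (α u)))

/-- Bimodule of a Hom-pre-Jordan algebra. -/
def IsHomPreJordanBimodule (m : A →ₗ[K] A →ₗ[K] A) (α : A →ₗ[K] A)
    (l r : A →ₗ[K] Module.End K V) (φ : Module.End K V) : Prop :=
  (∀ x, φ * l x = l (α x) * φ) ∧
  (∀ x, φ * r x = r (α x) * φ) ∧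
  (∀ x y z,
    l (ac m (α x) (α y)) * l (α z) * φ + l (ac m (α y) (α z)) * l (α x) * φ
      + l (ac m (α z) (α x)) * l (α y) * φ
    = l (α (α x)) * l (ac m y z) * φ + l (α (α y)) * l (ac m z x) * φ
      + l (α (α z)) * l (ac m x y) * φ) ∧
  (∀ x y z,
    l (ac m (ac m x z) (α y)) * φ * φ + l (α (α x)) * l (α y) * l z
      + l (α (α z)) * l (α y) * l x
    = l (α (α x)) * l (ac m y z) * φ + l (α (α y)) * l (ac m z x) * φ
      + l (α (α z)) * l (ac m x y) * φ) ∧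
  (∀ x y u,
    l (ac m (α x) (α y)) * r (α u) * φ + r (m (α x) (α u)) * (l (α y) + r (α y)) * φ
      + r (m (α y) (α u)) * (l (α x) + r (α x)) * φ
    = l (α (α x)) * r (α u) * (l y + r y) + l (α (α y)) * r (α u) * (l x + r x)
      + r (m (ac m x y) (α u)) * φ * φ) ∧
  (∀ x z u,
    r (α (α u)) * (l (ac m x z) + r (ac m x z)) * φ + l (α (α x)) * r (m z u) * φ
      + l (α (α z)) * r (m x u) * φ
    = l (α (α x)) * r (α u) * (l z + r z) + r (m (ac m z x) (α u)) * φ * φ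
      + l (α (α z)) * r (α u) * (l x + r x)) ∧
  (∀ y z u,
    r (α (α u)) * (l (α y) + r (α y)) * (l z + r z) + r (m (α y) (m z u)) * φ * φ
      + l (α (α z)) * l (α y) * r u
    = r (m (ac m y z) (α u)) * φ * φ + l (α (α y)) * r (α u) * (l z + r z)
      + l (α (α z)) * r (α u) * (l y + r y))

/-- vertical product of a pair of products: x·y = x≻y + y≺x. -/
def jdot (p s : A →ₗ[K] A →ₗ[K] A) (x y : A) : A := s x y + p y x

/-- horizontal product: x⋄y = x≻y + x≺y. -/
def jdia (p s : A →ₗ[K] A →ₗ[K] A) (x y : A) : A := s x y + p x y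

/-- x∘y = x·y + y·x. -/
def jcirc (p s : A →ₗ[K] A →ₗ[K] A) (x y : A) : A := jdot p s x y + jdot p s y x

/-- Hom-J-dendriform algebra. -/
def IsHomJDendriform (p s : A →ₗ[K] A →ₗ[K] A) (α : A →ₗ[K] A) : Prop :=
  (∀ x y z u,
    s (α (jcirc p s x y)) (α (s z u)) + s (α (jcirc p s y z)) (α (s x u))
      + s (α (jcirc p s z x)) (α (s y u))
    = s (α (α x)) (s (jcirc p s y z) (α u)) + s (α (α y)) (s (jcirc p s z x) (α u))
      + s (α (α z)) (s (jcirc p s x y) (α u))) ∧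
  (∀ x y z u,
    s (α (jcirc p s x y)) (α (s z u)) + s (α (jcirc p s y z)) (α (s x u))
      + s (α (jcirc p s z x)) (α (s y u))
    = s (α (α x)) (s (α y) (s z u)) + s (α (α z)) (s (α y) (s x u))
      + s (jcirc p s (α y) (jcirc p s z x)) (α (α u))) ∧
  (∀ x y z u,
    s (α (jcirc p s x y)) (α (p z u)) + p (α (jdot p s x z)) (α (jdia p s y u))
      + p (α (jdot p s y z)) (α (jdia p s x u))
    = s (α (α x)) (p (α z) (jdia p s y u)) + s (α (α y)) (p (α z) (jdia p s x u))
      + p (jdot p s (jcirc p s x y) (α z)) (α (α u))) ∧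
  (∀ x y z u,
    p (α (jdot p s z y)) (α (jdia p s x u)) + p (α (jdot p s x y)) (α (jdia p s z u))
      + s (α (jcirc p s x z)) (α (p y u))
    = s (α (α x)) (p (jdot p s z y) (α u)) + s (α (α z)) (p (jdot p s x y) (α u))
      + p (α (α y)) (jdia p s (jcirc p s x z) (α u))) ∧
  (∀ x y z u,
    s (α (jcirc p s x y)) (α (p z u)) + s (α (jdot p s x z)) (α (jdia p s y u))
      + p (α (jdot p s y z)) (α (jdia p s x u))
    = s (α (α x)) (s (α y) (p z u)) + p (α (α z)) (jdia p s (α y) (jdia p s z u))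
      + p (jdot p s (α y) (jdot p s x z)) (α (α u)))

/-- Hom-pre-alternative algebra. -/
def IsHomPreAlternative (p s : A →ₗ[K] A →ₗ[K] A) (α : A →ₗ[K] A) : Prop :=
  (∀ x y z, p (s x y) (α z) - s (α x) (p y z) + p (p y x) (α z) - p (α y) (p x z + s x z) = 0) ∧
  (∀ x y z, p (s x y) (α z) - s (α x) (p y z) + s (p x z + s x z) (α y) - s (α x) (s z y) = 0) ∧
  (∀ x y z, p (p x y) (α z) - p (α x) (p y z + s y z) + p (p x z) (α y) - p (α x) (p z y + s z y) = 0) ∧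
  (∀ x y z, s (p x y + s x y) (α z) - s (α x) (s y z) + s (p y x + s y x) (α z) - s (α y) (s x z) = 0)

/-- Hom-dendriform algebra. -/
def IsHomDendriform (p s : A →ₗ[K] A →ₗ[K] A) (α : A →ₗ[K] A) : Prop :=
  (∀ x y z, p (s x y) (α z) = s (α x) (p y z)) ∧
  (∀ x y z, p (p x y) (α z) = p (α x) (p y z + s y z)) ∧
  (∀ x y z, s (p x y + s x y) (α z) = s (α x) (s y z))

/-- Semidirect product multiplication for a Hom-Jordan representation. -/
def sdJMul (m : A →ₗ[K] A →ₗ[K] A) (ρ : A →ₗ[K] Module.End K V) :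
    (A × V) →ₗ[K] (A × V) →ₗ[K] (A × V) :=
  LinearMap.mk₂ K (fun x y => (m x.1 y.1, ρ x.1 y.2 + ρ y.1 x.2))
    (fun x x' y => by simp [Prod.ext_iff]; abel)
    (fun c x y => by simp [Prod.ext_iff, smul_add])
    (fun x y y' => by simp [Prod.ext_iff]; abel)
    (fun c x y => by simp [Prod.ext_iff, smul_add])

/-- Semidirect product multiplication for a Hom-pre-Jordan bimodule. -/
def sdPMul (m : A →ₗ[K] A →ₗ[K] A) (l r : A →ₗ[K] Module.End K V) :
    (A × V) →ₗ[K] (A × V) →ₗ[K] (A × V) :=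
  LinearMap.mk₂ K (fun x y => (m x.1 y.1, l x.1 y.2 + r y.1 x.2))
    (fun x x' y => by simp [Prod.ext_iff]; abel)
    (fun c x y => by simp [Prod.ext_iff, smul_add])
    (fun x y y' => by simp [Prod.ext_iff]; abel)
    (fun c x y => by simp [Prod.ext_iff, smul_add])

end Defs

/-! The O-operator `T` intertwines `u ∗ v = ρ(T u) v` with the Jordan product,
`T (u • v) = T u ∘ T v`, and `φ` with `α`; so each Hom-pre-Jordan identity for `∗`, evaluated
at `u`, is an operator identity of the representation evaluated at `T x, T y, T z`. The first
is the second representation identity verbatim. The second follows from the third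
representation identity once one knows that `ρ(α²a) ρ(α b) ρ(c)` is symmetric in `a, b`. -/

section HomJordanRep

variable {K A V : Type*} [Field K] [AddCommGroup A] [Module K A] [AddCommGroup V] [Module K V]
  {m : A →ₗ[K] A →ₗ[K] A} {α : A →ₗ[K] A} {ρ : A →ₗ[K] Module.End K V} {φ : Module.End K V}

/-- The defect `ρ(α²a) ρ(α b) ρ c - ρ(α²b) ρ(α a) ρ c` is antisymmetric in its first two
arguments by definition and symmetric in the first and third by the third representation
identity; these two transpositions force it to equal its own negative. -/
theorem IsHomJordanRep.rho_rho_rho_swap [NeZero (2 : K)] (comm : ∀ x y, m x y = m y x)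
    (hrep : IsHomJordanRep m α ρ φ) (a b c : A) :
    ρ (α (α a)) * ρ (α b) * ρ c = ρ (α (α b)) * ρ (α a) * ρ c := by
  have swap_outer : ∀ a b c : A,
      ρ (α (α a)) * ρ (α c) * ρ b + ρ (α (α c)) * ρ (α b) * ρ a
        = ρ (α (α b)) * ρ (α c) * ρ a + ρ (α (α c)) * ρ (α a) * ρ b := by
    intro a b c
    have h := hrep.2.2 b a c
    rw [← comm a b, ← comm (α a) (α b), comm (α a) (α c), comm (α c) (α b)] at h
    linear_combination (norm := abel) hrep.2.2 a b c - h
  have two_mul_eq : (2 : K) • (ρ (α (α a)) * ρ (α b) * ρ c)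
      = (2 : K) • (ρ (α (α b)) * ρ (α a) * ρ c) := by
    rw [two_smul, two_smul]
    linear_combination (norm := abel) swap_outer c b a - swap_outer b a c + swap_outer a c b
  exact smul_right_injective _ two_ne_zero two_mul_eq

theorem IsHomJordanRep.second_preJordan_identity [NeZero (2 : K)] (comm : ∀ x y, m x y = m y x)
    (hrep : IsHomJordanRep m α ρ φ) (a b c : A) :
    ρ (m (m a c) (α b)) * φ * φ + ρ (α (α a)) * ρ (α b) * ρ c + ρ (α (α c)) * ρ (α b) * ρ a
      = ρ (α (α a)) * ρ (m b c) * φ + ρ (α (α b)) * ρ (m c a) * φ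
        + ρ (α (α c)) * ρ (m a b) * φ := by
  have h := hrep.2.2 a c b
  rw [comm (α a) (α c), comm (α c) (α b), comm (α b) (α a)] at h
  linear_combination (norm := abel) h - hrep.rho_rho_rho_swap comm b c a - hrep.2.1 a b c

end HomJordanRep

section OOperator

variable {K A V : Type*} [Field K] [AddCommGroup A] [Module K A] [AddCommGroup V] [Module K V]

def IsOOperator (m : A →ₗ[K] A →ₗ[K] A) (α : A →ₗ[K] A) (ρ : A →ₗ[K] Module.End K V)
    (φ : Module.End K V) (T : V →ₗ[K] A) : Prop :=
  T ∘ₗ φ = α ∘ₗ T ∧ ∀ u v, m (T u) (T v) = T (ρ (T u) v + ρ (T v) u)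

variable {m : A →ₗ[K] A →ₗ[K] A} {α : A →ₗ[K] A} {ρ : A →ₗ[K] Module.End K V}
  {φ : Module.End K V} {T : V →ₗ[K] A}

theorem IsOOperator.apply_twist (hT : IsOOperator m α ρ φ T) (v : V) : T (φ v) = α (T v) :=
  LinearMap.congr_fun hT.1 v

theorem IsOOperator.apply_ac (hT : IsOOperator m α ρ φ T) (u v : V) :
    T (ac ((ρ ∘ₗ T : V →ₗ[K] Module.End K V) : V →ₗ[K] V →ₗ[K] V) u v) = m (T u) (T v) :=
  (hT.2 u v).symm

theorem IsOOperator.isHomPreJordan [NeZero (2 : K)] (hT : IsOOperator m α ρ φ T)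
    (comm : ∀ x y, m x y = m y x) (hrep : IsHomJordanRep m α ρ φ) :
    IsHomPreJordan ((ρ ∘ₗ T : V →ₗ[K] Module.End K V) : V →ₗ[K] V →ₗ[K] V) φ := by
  constructor
  · intro x y z u
    simp only [LinearMap.comp_apply, hT.apply_ac, hT.apply_twist]
    exact (LinearMap.congr_fun (hrep.2.1 (T x) (T y) (T z)) u).symm
  · intro x y z u
    simp only [LinearMap.comp_apply, hT.apply_ac, hT.apply_twist]
    exact LinearMap.congr_fun (hrep.second_preJordan_identity comm (T x) (T y) (T z)) u

end OOperator

/-- an O-operator on a Hom-Jordan algebra induces a Hom-pre-Jordan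
structure on the representation space. -/
theorem oOperator_homPreJordan
    {K : Type*} {A V : Type*} [Field K] [CharZero K] [AddCommGroup A] [Module K A]
    [AddCommGroup V] [Module K V]
    (m : A →ₗ[K] A →ₗ[K] A) (α : A →ₗ[K] A) (hA : IsHomJordan m α)
    (ρ : A →ₗ[K] Module.End K V) (φ : Module.End K V) (hrep : IsHomJordanRep m α ρ φ)
    (T : V →ₗ[K] A) (hTφ : T ∘ₗ φ = α ∘ₗ T)
    (hT : ∀ u v, m (T u) (T v) = T (ρ (T u) v + ρ (T v) u)) :
    IsHomPreJordan ((ρ ∘ₗ T : V →ₗ[K] Module.End K V) : V →ₗ[K] V →ₗ[K] V) φ :=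
  IsOOperator.isHomPreJordan ⟨hTφ, hT⟩ hA.1 hrep
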